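/- Let B ⊆ ℝ be a Bernstein set and let V be an open subset of the Sorgenfrey plane S × S such that (x, −x) ∈ V for every x ∈ B. Then for every nonempty open interval (c, d) ⊆ ℝ there exist a positive integer k and real numbers a < b with (a, b) ⊆ (c, d) such that the set {x ∈ B : [x, x + 1/k) × [−x, −x + 1/k) ⊆ V} ∩ (a, b) is dense in (a, b) with respect to the Euclidean topology of ℝ (equivalently, its Euclidean closure equals [a, b]). -/

import Mathlib

/-- The Sorgenfrey topology on `ℝ`: generated by the half-open intervals `[a, b)`. -/
def sorgenfreyLine : TopologicalSpace ℝ :=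
  TopologicalSpace.generateFrom {s : Set ℝ | ∃ a b : ℝ, s = Set.Ico a b}

/-- The Sorgenfrey plane topology on `ℝ × ℝ`: the product of two copies of the
Sorgenfrey topology. -/
def sorgenfreyPlane : TopologicalSpace (ℝ × ℝ) :=
  TopologicalSpace.induced Prod.fst sorgenfreyLine ⊓
    TopologicalSpace.induced Prod.snd sorgenfreyLine

/-- A Bernstein set: both `B` and its complement meet every uncountable closed
(in the Euclidean topology) subset of `ℝ`. -/
def IsBernstein (B : Set ℝ) : Prop :=
  ∀ C : Set ℝ, IsClosed C → ¬C.Countable → (B ∩ C).Nonempty ∧ (Bᶜ ∩ C).Nonempty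

/-!
A point `x ∈ B` has some Sorgenfrey square `[x, x + 1/k) × [-x, -x + 1/k)` inside `V`, so
`B ∩ (c, d)` is the countable union over `k` of the sets `B_k` of points admitting the square of
side `1/k`. A Bernstein set is not meagre in any open interval: otherwise a dense `Gδ` set
disjoint from it would meet the interval in an uncountable Borel set, hence (perfect set
property) contain an uncountable closed set, which `B` must meet. So by Baire some `B_k ∩ (c, d)`
is somewhere dense, i.e. dense in a subinterval `(a, b)`.
-/

open Set Filter Topology

lemma nhds_sorgenfreyLine (x : ℝ) : @nhds ℝ sorgenfreyLine x = 𝓝[≥] x := by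
  rw [sorgenfreyLine, TopologicalSpace.nhds_generateFrom]
  apply le_antisymm
  · intro s hs
    obtain ⟨u, hxu, hsub⟩ := mem_nhdsGE_iff_exists_Ico_subset.1 hs
    exact mem_of_superset
      (mem_iInf_of_mem (Ico x u) (mem_iInf_of_mem ⟨left_mem_Ico.2 hxu, x, u, rfl⟩
        (mem_principal_self _))) hsub
  · simp only [le_iInf_iff, le_principal_iff]
    rintro _ ⟨hx, a, b, rfl⟩
    exact Ico_mem_nhdsGE_of_mem hx

lemma nhds_sorgenfreyPlane (p : ℝ × ℝ) :
    @nhds (ℝ × ℝ) sorgenfreyPlane p = 𝓝[≥] p.1 ×ˢ 𝓝[≥] p.2 := by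
  rw [sorgenfreyPlane,
    @nhds_inf _ (.induced Prod.fst sorgenfreyLine) (.induced Prod.snd sorgenfreyLine) p,
    @nhds_induced _ _ sorgenfreyLine, @nhds_induced _ _ sorgenfreyLine, nhds_sorgenfreyLine,
    nhds_sorgenfreyLine, prod_eq_inf]

lemma exists_nat_Ico_prod_Ico_subset {x y : ℝ} {V : Set (ℝ × ℝ)}
    (hV : V ∈ 𝓝[≥] x ×ˢ 𝓝[≥] y) :
    ∃ n : ℕ, Ico x (x + 1 / (n + 1)) ×ˢ Ico y (y + 1 / (n + 1)) ⊆ V := by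
  obtain ⟨s, hs, t, ht, hst⟩ := mem_prod_iff.1 hV
  obtain ⟨u, hxu, hsu⟩ := mem_nhdsGE_iff_exists_Ico_subset.1 hs
  obtain ⟨v, hyv, htv⟩ := mem_nhdsGE_iff_exists_Ico_subset.1 ht
  obtain ⟨n, hn⟩ := exists_nat_one_div_lt
    (lt_min (sub_pos.2 hxu) (sub_pos.2 hyv) : (0 : ℝ) < min (u - x) (v - y))
  refine ⟨n, (prod_mono (fun z hz => hsu ⟨hz.1, ?_⟩) fun z hz => htv ⟨hz.1, ?_⟩).trans hst⟩
  · linarith [hz.2, min_le_left (u - x) (v - y)]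
  · linarith [hz.2, min_le_right (u - x) (v - y)]

lemma Continuous.isClosed_range_not_countable_of_injective {α : Type*} [TopologicalSpace α]
    [T2Space α] {f : (ℕ → Bool) → α} (hf : Continuous f) (hinj : f.Injective) :
    IsClosed (range f) ∧ ¬(range f).Countable := by
  refine ⟨(isCompact_range hf).isClosed, fun hc => ?_⟩
  have := hc.to_subtype
  have hcount : Countable (ℕ → Bool) := (rangeFactorization_injective.2 hinj).countable
  rw [← Cardinal.mk_le_aleph0_iff] at hcount
  simp only [Cardinal.mk_pi, Cardinal.mk_fintype, Fintype.card_bool, Nat.cast_ofNat,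
    Cardinal.prod_const, Cardinal.mk_nat, Cardinal.lift_id, Cardinal.two_power_aleph0] at hcount
  exact Cardinal.aleph0_lt_continuum.not_ge hcount

theorem MeasurableSet.exists_isClosed_subset_not_countable {α : Type*} [tα : TopologicalSpace α]
    [PolishSpace α] [MeasurableSpace α] [BorelSpace α] {s : Set α} (hs : MeasurableSet s)
    (hunc : ¬s.Countable) : ∃ K ⊆ s, IsClosed K ∧ ¬K.Countable := by
  -- `s` is closed for a finer Polish topology `t`, which becomes a local instance here.
  obtain ⟨t, hle, ht, hclosed, -⟩ := hs.isClopenable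
  obtain ⟨f, hfs, hf, hinj⟩ :=
    @IsClosed.exists_nat_bool_injection_of_not_countable α t ht s hclosed hunc
  exact ⟨range f, hfs,
    @Continuous.isClosed_range_not_countable_of_injective α tα _ f (continuous_le_rng hle hf) hinj⟩

theorem not_countable_inter_of_mem_residual {E : Type*} [NormedAddCommGroup E] [NormedSpace ℝ E]
    [CompleteSpace E] [Nontrivial E] {G U : Set E} (hG : G ∈ residual E) (hU : IsOpen U)
    (hne : U.Nonempty) : ¬(G ∩ U).Countable := by
  intro hc
  have hres : G ∩ (G ∩ U)ᶜ ∈ residual E :=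
    inter_mem hG (residual_of_dense_Gδ hc.isGδ_compl (hc.dense_compl ℝ))
  obtain ⟨x, hxU, hxG, hx⟩ := (dense_of_mem_residual hres).inter_open_nonempty U hU hne
  exact hx ⟨hxG, hxU⟩

theorem IsBernstein.not_isMeagre_inter {B U : Set ℝ} (hB : IsBernstein B) (hU : IsOpen U)
    (hne : U.Nonempty) : ¬IsMeagre (B ∩ U) := by
  intro hB'
  obtain ⟨G, hGB, hGδ, hGdense⟩ := mem_residual.1 hB'
  obtain ⟨K, hKG, hKclosed, hKunc⟩ :=
    (hGδ.measurableSet.inter hU.measurableSet).exists_isClosed_subset_not_countable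
      (not_countable_inter_of_mem_residual (residual_of_dense_Gδ hGδ hGdense) hU hne)
  obtain ⟨x, hxB, hxK⟩ := (hB K hKclosed hKunc).1
  exact hGB (hKG hxK).1 ⟨hxB, (hKG hxK).2⟩

section DenselyOrdered

variable {α : Type*} [TopologicalSpace α] [LinearOrder α] [OrderTopology α] [DenselyOrdered α]

theorem closure_inter_Ioo_eq_Icc {s : Set α} {a b : α} (hab : a < b)
    (hs : Ioo a b ⊆ closure s) : closure (s ∩ Ioo a b) = Icc a b := by
  refine (closure_mono inter_subset_right).trans_eq (closure_Ioo hab.ne) |>.antisymm ?_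
  rw [← closure_Ioo hab.ne]
  refine closure_minimal (fun x hx => ?_) isClosed_closure
  rw [inter_comm]
  exact isOpen_Ioo.inter_closure ⟨hx, hs hx⟩

lemma interior_closure_subset_Ioo [NoMinOrder α] [NoMaxOrder α] {s : Set α} {c d : α}
    (hs : s ⊆ Ioo c d) : interior (closure s) ⊆ Ioo c d :=
  calc interior (closure s) ⊆ interior (closure (Ioo c d)) := interior_mono (closure_mono hs)
    _ ⊆ interior (Icc c d) := interior_mono (closure_minimal Ioo_subset_Icc_self isClosed_Icc)
    _ = Ioo c d := interior_Icc

end DenselyOrdered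

/-- If `B` is a Bernstein set and `V` is open in the Sorgenfrey plane with `(x,-x) ∈ V`
for all `x ∈ B`, then inside every nonempty interval `(c, d)` there are `k ≥ 1` and a
subinterval `(a, b)` such that `{x ∈ B : [x, x + 1/k) × [-x, -x + 1/k) ⊆ V} ∩ (a, b)`
is dense in `(a, b)` for the Euclidean topology, i.e. its Euclidean closure is `[a, b]`. -/
theorem bernstein_dense_uniform_square_in_subinterval (B : Set ℝ) (hB : IsBernstein B)
    (V : Set (ℝ × ℝ)) (hV : sorgenfreyPlane.IsOpen V)
    (hBV : ∀ x ∈ B, ((x, -x) : ℝ × ℝ) ∈ V)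
    (c d : ℝ) (hcd : c < d) :
    ∃ k : ℕ, 0 < k ∧ ∃ a b : ℝ, a < b ∧ Set.Ioo a b ⊆ Set.Ioo c d ∧
      closure ({x ∈ B | Set.Ico x (x + 1 / (k : ℝ)) ×ˢ Set.Ico (-x) (-x + 1 / (k : ℝ)) ⊆ V}
        ∩ Set.Ioo a b) = Set.Icc a b := by
  -- Indexed by `n + 1`: for `k = 0` the square is empty, so every point of `B` would qualify.
  set T : ℕ → Set ℝ := fun n =>
    {x ∈ B | Ico x (x + 1 / ((n + 1 : ℕ) : ℝ)) ×ˢ Ico (-x) (-x + 1 / ((n + 1 : ℕ) : ℝ)) ⊆ V}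
  have hcover : B ∩ Ioo c d ⊆ ⋃ n, T n ∩ Ioo c d := by
    rintro x ⟨hxB, hx⟩
    have hVx : V ∈ @nhds _ sorgenfreyPlane (x, -x) :=
      @IsOpen.mem_nhds _ sorgenfreyPlane _ _ hV (hBV x hxB)
    obtain ⟨n, hn⟩ := exists_nat_Ico_prod_Ico_subset (nhds_sorgenfreyPlane _ ▸ hVx)
    exact mem_iUnion.2 ⟨n, ⟨hxB, by simpa using hn⟩, hx⟩
  obtain ⟨n, hn⟩ : ∃ n, ¬IsNowhereDense (T n ∩ Ioo c d) := by
    by_contra! h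
    exact hB.not_isMeagre_inter isOpen_Ioo (nonempty_Ioo.2 hcd)
      ((isMeagre_iUnion fun n => (h n).isMeagre).mono hcover)
  obtain ⟨a, b, hab, hsub⟩ := isOpen_interior.exists_Ioo_subset (nonempty_iff_ne_empty.2 hn)
  refine ⟨n + 1, n.succ_pos, a, b, hab,
    hsub.trans (interior_closure_subset_Ioo inter_subset_right), ?_⟩
  exact closure_inter_Ioo_eq_Icc hab
    (hsub.trans (interior_subset.trans (closure_mono inter_subset_left)))
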